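/- For every convex tree T with maximal element P_T, the union ⋃_{P∈T} P equals the union of the upper tile (P_T)_u, the lower tile (P_T)_d, the lower tiles P_d for P ∈ T_u, and the upper tiles P_u for P ∈ T_d, and all tiles listed in this union are pairwise disjoint. -/

import Mathlib

open MeasureTheory Set ENNReal NNReal

noncomputable section

namespace Quartile

/-- The Walsh functions on `[0,1)` (extended by zero), in Walsh-Paley order,
defined by the recursion `W_{2l} = W_l(2x) + W_l(2x-1)`, `W_{2l+1} = W_l(2x) - W_l(2x-1)`. -/
def walsh (n : ℕ) (x : ℝ) : ℝ :=
  if h : n = 0 then (if 0 ≤ x ∧ x < 1 then 1 else 0)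
  else if n % 2 = 0 then walsh (n / 2) (2 * x) + walsh (n / 2) (2 * x - 1)
  else walsh (n / 2) (2 * x) - walsh (n / 2) (2 * x - 1)
termination_by n
decreasing_by
  all_goals exact Nat.div_lt_self (Nat.pos_of_ne_zero h) one_lt_two

/-- The dyadic interval `[2^k n, 2^k (n+1)) ⊆ [0,∞)`. -/
def dyadicI (k : ℤ) (n : ℕ) : Set ℝ := Ico ((2:ℝ)^k * n) ((2:ℝ)^k * (n+1))

/-- A tile: the dyadic rectangle `[2^k n, 2^k(n+1)) × [2^{-k} l, 2^{-k}(l+1))` of area one. -/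
structure Tile where
  k : ℤ
  n : ℕ
  l : ℕ

namespace Tile

/-- The time interval `I_p` of a tile. -/
def timeI (p : Tile) : Set ℝ := Ico ((2:ℝ)^p.k * p.n) ((2:ℝ)^p.k * (p.n+1))

/-- The frequency interval `ω_p` of a tile. -/
def freqI (p : Tile) : Set ℝ := Ico ((2:ℝ)^(-p.k) * p.l) ((2:ℝ)^(-p.k) * (p.l+1))

/-- The tile as a subset of the phase plane. -/
def toSet (p : Tile) : Set (ℝ × ℝ) := p.timeI ×ˢ p.freqI

/-- The Walsh wave packet `w_p` of a tile, `L²`-normalized. -/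
def wp (p : Tile) (x : ℝ) : ℝ :=
  Real.sqrt ((2:ℝ)^(-p.k)) * walsh p.l ((2:ℝ)^(-p.k) * x - p.n)

end Tile

/-- The order on dyadic rectangles: `p ≤ q` iff `I_p ⊆ I_q` and `ω_q ⊆ ω_p`, for tiles. -/
def tileLE (p q : Tile) : Prop := p.timeI ⊆ q.timeI ∧ q.freqI ⊆ p.freqI

/-- The inner product `⟨f, w_p⟩` of a function with a (real valued) wave packet. -/
def coef (f : ℝ → ℂ) (p : Tile) : ℂ := ∫ x, f x * (p.wp x : ℂ)

/-- The rank one projection `Π_p f = ⟨f, w_p⟩ w_p` associated to a single tile. -/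
def projT (p : Tile) (f : ℝ → ℂ) (x : ℝ) : ℂ := coef f p * (p.wp x : ℂ)

/-- The projection associated to a collection of (pairwise disjoint) tiles. -/
def projSet (𝔭 : Set Tile) (f : ℝ → ℂ) (x : ℝ) : ℂ := ∑' p : 𝔭, projT p f x

/-- The maximal tiles contained in a subset `S` of the phase plane; when `S` is a disjoint
union of tiles (of the kind appearing below) these form the canonical tiling of `S`. -/
def maxTiles (S : Set (ℝ × ℝ)) : Set Tile :=
  {p | p.toSet ⊆ S ∧ ∀ q : Tile, q.toSet ⊆ S → tileLE p q → q = p}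

/-- The phase plane projection `Π_S` associated to a subset `S` of the phase plane,
computed with the canonical tiling of `S` by maximal tiles (the projection is independent
of the chosen tiling). -/
def piProj (S : Set (ℝ × ℝ)) (f : ℝ → ℂ) (x : ℝ) : ℂ := projSet (maxTiles S) f x

/-- A bitile: the dyadic rectangle `[2^k n, 2^k(n+1)) × [2^{1-k} l, 2^{1-k}(l+1))` of area two. -/
structure Bitile where
  k : ℤ
  n : ℕ
  l : ℕ

namespace Bitile

/-- The time interval `I_P` of a bitile. -/
def timeI (P : Bitile) : Set ℝ := Ico ((2:ℝ)^P.k * P.n) ((2:ℝ)^P.k * (P.n+1))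

/-- The frequency interval `ω_P` of a bitile. -/
def freqI (P : Bitile) : Set ℝ := Ico ((2:ℝ)^(1-P.k) * P.l) ((2:ℝ)^(1-P.k) * (P.l+1))

/-- The bitile as a subset of the phase plane. -/
def toSet (P : Bitile) : Set (ℝ × ℝ) := P.timeI ×ˢ P.freqI

/-- The lower tile `P_d` of a bitile. -/
def d (P : Bitile) : Tile := ⟨P.k, P.n, 2*P.l⟩

/-- The upper tile `P_u` of a bitile. -/
def u (P : Bitile) : Tile := ⟨P.k, P.n, 2*P.l+1⟩

/-- The left tile of a bitile. -/
def left (P : Bitile) : Tile := ⟨P.k-1, 2*P.n, P.l⟩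

/-- The right tile of a bitile. -/
def right (P : Bitile) : Tile := ⟨P.k-1, 2*P.n+1, P.l⟩

/-- The `L^∞`-normalized wave packet `φ_{P_d} = |I_P|^{1/2} w_{P_d}`. -/
def phid (P : Bitile) (x : ℝ) : ℝ := Real.sqrt ((2:ℝ)^P.k) * P.d.wp x

end Bitile

/-- The order on dyadic rectangles, for bitiles. -/
def bitileLE (P Q : Bitile) : Prop := P.timeI ⊆ Q.timeI ∧ Q.freqI ⊆ P.freqI

/-- Strict order on bitiles. -/
def bitileLT (P Q : Bitile) : Prop := bitileLE P Q ∧ P ≠ Q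

/-- A collection of bitiles is convex if together with `P₁ < P < P₂` for `P₁, P₂` in the
collection it contains `P`. -/
def IsConvex (PP : Set Bitile) : Prop :=
  ∀ P1 P2 P : Bitile, P1 ∈ PP → P2 ∈ PP → bitileLT P1 P → bitileLT P P2 → P ∈ PP

/-- A tree: a collection of bitiles with a (unique) maximal element `P_T = I_T × ω_T`. -/
structure Tree where
  carrier : Set Bitile
  top : Bitile
  top_mem : top ∈ carrier
  le_top : ∀ P ∈ carrier, bitileLE P top

namespace Tree

/-- `T_d`: those bitiles of the tree whose lower tile frequency interval contains `ω_T`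
(in the paper's notation, `P_T ≤ P_d`). -/
def Td (T : Tree) : Set Bitile := {P | P ∈ T.carrier ∧ T.top.freqI ⊆ P.d.freqI}

/-- `T_u`: those bitiles of the tree whose upper tile frequency interval contains `ω_T`
(in the paper's notation, `P_T ≤ P_u`). -/
def Tu (T : Tree) : Set Bitile := {P | P ∈ T.carrier ∧ T.top.freqI ⊆ P.u.freqI}

/-- The region `⋃_{P ∈ T} P` of the phase plane occupied by a tree. -/
def unionSet (T : Tree) : Set (ℝ × ℝ) := ⋃ P ∈ T.carrier, P.toSet

/-- The phase plane projection `Π_T` of a (convex) tree. -/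
def proj (T : Tree) (f : ℝ → ℂ) : ℝ → ℂ := piProj T.unionSet f

end Tree

/-- The vertical dilation `2^L S` of a subset of the phase plane. -/
def dilate (L : ℕ) (S : Set (ℝ × ℝ)) : Set (ℝ × ℝ) := (fun q => (q.1, (2:ℝ)^L * q.2)) '' S

/-- The enlarged tree `T^{(L)}` with respect to a frequency `ξ ∈ ω_T`: all bitiles `P` with
`2^L ξ ∈ ω_P` contained in a rectangle `2^L P'` with `P' ∈ T`. -/
def Tree.enlarged (L : ℕ) (T : Tree) (ξ : ℝ) : Set Bitile :=
  {P | (2:ℝ)^L * ξ ∈ P.freqI ∧ ∃ P' ∈ T.carrier, P.toSet ⊆ dilate L P'.toSet}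

/-- The region of the phase plane occupied by the enlarged tree `T^{(L)}`. -/
def Tree.enlargedSet (L : ℕ) (T : Tree) (ξ : ℝ) : Set (ℝ × ℝ) :=
  ⋃ P ∈ T.enlarged L ξ, P.toSet

/-- The left endpoint of `ω_T`, a canonical choice of `ξ ∈ ω_T`. -/
def Tree.xiTop (T : Tree) : ℝ := (2:ℝ)^(1-T.top.k) * T.top.l

/-- The phase plane projection `Π_{T^{(L)}}` of the enlarged tree (independent of the
choice of `ξ ∈ ω_T`; we use the canonical choice).  For `L = 0` this is `Π_T`. -/
def Tree.projL (L : ℕ) (T : Tree) (f : ℝ → ℂ) : ℝ → ℂ := piProj (T.enlargedSet L T.xiTop) f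

/-- `size^{(L)}(PP, f) = sup |I_T|^{-1/2} ‖Π_{T^{(L)}} f‖₂`, the supremum over convex trees
`T ⊆ PP`.  For `L = 0` this is the plain `size(PP, f)`. -/
def size (L : ℕ) (PP : Set Bitile) (f : ℝ → ℂ) : ℝ≥0∞ :=
  ⨆ (T : Tree) (_ : T.carrier ⊆ PP ∧ IsConvex T.carrier),
    (ENNReal.ofReal (Real.sqrt ((2:ℝ)^T.top.k)))⁻¹ * eLpNorm (T.projL L f) 2 volume

/-- The quartile form `Λ_{PP}` restricted to a collection `PP` of bitiles. -/
def quartileFormOn (L : ℕ) (PP : Set Bitile) (f1 f2 f3 : ℝ → ℂ) : ℂ :=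
  ∫ x, ∑' P : PP, (P.1.phid x : ℂ) * projT P.1.u f1 x *
      piProj (dilate L P.1.d.toSet) f2 x * piProj (dilate L P.1.d.toSet) f3 x

/-- The bitiles contained in the strip `ℝ₊ × [0, 2^N)`. -/
def stripBitiles (N : ℕ) : Set Bitile := {P | P.freqI ⊆ Ico (0:ℝ) ((2:ℝ)^N)}

/-- The quartile form `Λ_L` (with frequency truncation parameter `N`). -/
def quartileForm (L N : ℕ) (f1 f2 f3 : ℝ → ℂ) : ℂ :=
  quartileFormOn L (stripBitiles N) f1 f2 f3

/-- The quartile form perturbed by a bounded sequence of coefficients `c_P`. -/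
def quartileFormC (L N : ℕ) (c : Bitile → ℂ) (f1 f2 f3 : ℝ → ℂ) : ℂ :=
  ∫ x, ∑' P : stripBitiles N, c P.1 * (P.1.phid x : ℂ) * projT P.1.u f1 x *
      piProj (dilate L P.1.d.toSet) f2 x * piProj (dilate L P.1.d.toSet) f3 x

/-- The counting function `Σ_{T ∈ 𝕋} 1_{I_T}` of a collection of trees. -/
def countingFn (𝕋 : Set Tree) (x : ℝ) : ℝ≥0∞ :=
  ∑' T : 𝕋, (T.1.top.timeI).indicator (fun _ => (1:ℝ≥0∞)) x

/-- The average of an `ℝ≥0∞`-valued function over a set. -/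
def avgOn (I : Set ℝ) (g : ℝ → ℝ≥0∞) : ℝ≥0∞ := (volume I)⁻¹ * ∫⁻ x in I, g x

/-- The dyadic BMO norm on `[0,∞)` of an `ℝ≥0∞`-valued function. -/
def dyadicBMO (g : ℝ → ℝ≥0∞) : ℝ≥0∞ :=
  ⨆ (k : ℤ) (n : ℕ), avgOn (dyadicI k n)
    (fun x => (g x - avgOn (dyadicI k n) g) + (avgOn (dyadicI k n) g - g x))

/-- The dyadic Hardy-Littlewood maximal function on `[0,∞)`. -/
def dyadicMax (f : ℝ → ℂ) (x : ℝ) : ℝ≥0∞ :=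
  ⨆ (k : ℤ) (n : ℕ) (_ : x ∈ dyadicI k n),
    (volume (dyadicI k n))⁻¹ * ∫⁻ y in dyadicI k n, ‖f y‖₊

/-- The dyadic interval of length `2^j` containing `y ≥ 0`. -/
def freqInterval (j : ℤ) (y : ℝ) : Set ℝ :=
  Ico ((2:ℝ)^j * ⌊y / (2:ℝ)^j⌋) ((2:ℝ)^j * (⌊y / (2:ℝ)^j⌋ + 1))

/-- The projection `Π_l := Π_{I_T × ω_l}`, where `ω_l` is the dyadic interval of
length `2^l` containing the frequency `y`. -/
def PiScale (T : Tree) (j : ℤ) (y : ℝ) (f : ℝ → ℂ) : ℝ → ℂ :=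
  piProj (T.top.timeI ×ˢ freqInterval j y) f

/-- The difference projection `Π_l^Δ = Π_l - Π_{l-1}`. -/
def PiDelta (T : Tree) (j : ℤ) (y : ℝ) (f : ℝ → ℂ) (x : ℝ) : ℂ :=
  PiScale T j y f x - PiScale T (j-1) y f x

/-!
Every point `z` of a bitile `P` of a convex tree `T` lies in a bitile `Q ∈ T` containing `z` of
maximal scale. If `Q = P_T` the point lies in `(P_T)_u ∪ (P_T)_d`. Otherwise `ω_T` lies in one
half of `ω_Q`; if the frequency of `z` lay in the same half, the bitile of doubled time interval
above that half would lie between `Q` and `P_T`, hence in `T` by convexity, contradicting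
maximality. So `z` lies in the half of `Q` opposite to `ω_T`, i.e. in `Q_d` with `Q ∈ T_u` or
in `Q_u` with `Q ∈ T_d`.

For disjointness: each listed tile is a half of a bitile of `T`, whose frequency interval
contains the left endpoint `ξ_T` of `ω_T`, and each except the two halves of `P_T` misses `ξ_T`.
If two listed tiles of different time scales meet in frequency, the frequency interval of the
bitile of the longer one lies in that of the shorter one, which therefore contains `ξ_T` and is a
half of `P_T`; impossible, as `P_T` has the largest time scale. Tiles of equal scale are equal or
disjoint.
-/

theorem mem_dyadicI {k : ℤ} {n : ℕ} {y : ℝ} :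
    y ∈ dyadicI k n ↔ 0 ≤ y ∧ ⌊y / (2:ℝ) ^ k⌋₊ = n := by
  have hk : (0:ℝ) < 2 ^ k := zpow_pos two_pos k
  constructor
  · rintro ⟨h1, h2⟩
    have hy : 0 ≤ y := le_trans (by positivity) h1
    refine ⟨hy, (Nat.floor_eq_iff (by positivity)).mpr ⟨?_, ?_⟩⟩
    · rw [le_div_iff₀ hk]; linarith
    · rw [div_lt_iff₀ hk]; linarith
  · rintro ⟨hy, rfl⟩
    constructor
    · rw [mul_comm, ← le_div_iff₀ hk]; exact Nat.floor_le (by positivity)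
    · rw [mul_comm, ← div_lt_iff₀ hk]; exact Nat.lt_floor_add_one _

theorem left_mem_dyadicI (k : ℤ) (n : ℕ) : (2:ℝ) ^ k * n ∈ dyadicI k n :=
  ⟨le_rfl, by have := zpow_pos (two_pos (α := ℝ)) k; linarith⟩

theorem eq_of_mem_dyadicI {k : ℤ} {n n' : ℕ} {y : ℝ} (h : y ∈ dyadicI k n)
    (h' : y ∈ dyadicI k n') : n = n' := by
  rw [mem_dyadicI] at h h'; omega

theorem disjoint_dyadicI {k : ℤ} {n n' : ℕ} (hn : n ≠ n') :
    Disjoint (dyadicI k n) (dyadicI k n') :=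
  Set.disjoint_left.mpr fun _ h h' => hn (eq_of_mem_dyadicI h h')

theorem floor_div_two_zpow_of_le {k k' : ℤ} (h : k ≤ k') (y : ℝ) :
    ⌊y / (2:ℝ) ^ k'⌋₊ = ⌊y / (2:ℝ) ^ k⌋₊ / 2 ^ (k' - k).toNat := by
  have h2 : (2:ℝ) ^ k' = 2 ^ k * ((2 ^ (k' - k).toNat : ℕ) : ℝ) := by
    push_cast
    rw [← zpow_natCast, Int.toNat_of_nonneg (by omega), ← zpow_add₀ two_ne_zero]
    congr 1; ring
  rw [h2, ← div_div, Nat.floor_div_natCast]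

theorem dyadicI_subset_of_le {k k' : ℤ} {n n' : ℕ} (h : k ≤ k') {y : ℝ}
    (hy : y ∈ dyadicI k n) (hy' : y ∈ dyadicI k' n') : dyadicI k n ⊆ dyadicI k' n' := by
  intro z hz
  rw [mem_dyadicI] at hy hy' hz ⊢
  refine ⟨hz.1, ?_⟩
  rw [floor_div_two_zpow_of_le h, hz.2, ← hy.2, ← floor_div_two_zpow_of_le h, hy'.2]

theorem dyadicI_subset_succ (k : ℤ) (n : ℕ) : dyadicI k n ⊆ dyadicI (k + 1) (n / 2) := by
  intro y hy
  rw [mem_dyadicI] at hy ⊢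
  refine ⟨hy.1, ?_⟩
  rw [floor_div_two_zpow_of_le (le_add_of_nonneg_right zero_le_one), hy.2]
  simp

theorem dyadicI_succ (k : ℤ) (l : ℕ) :
    dyadicI (k + 1) l = dyadicI k (2 * l) ∪ dyadicI k (2 * l + 1) := by
  ext y
  simp only [Set.mem_union, mem_dyadicI]
  have hfloor : ⌊y / (2:ℝ) ^ (k + 1)⌋₊ = ⌊y / (2:ℝ) ^ k⌋₊ / 2 := by
    simpa using floor_div_two_zpow_of_le (le_add_of_nonneg_right zero_le_one) y
  constructor
  · rintro ⟨hy, hl⟩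
    rw [hfloor] at hl
    exact (by omega : _ ∨ _).imp (⟨hy, ·⟩) (⟨hy, ·⟩)
  · rintro (⟨hy, hl⟩ | ⟨hy, hl⟩) <;> exact ⟨hy, by rw [hfloor]; omega⟩

theorem le_of_dyadicI_subset {k k' : ℤ} {n n' : ℕ} (h : dyadicI k n ⊆ dyadicI k' n') :
    k ≤ k' := by
  have hk := zpow_pos (two_pos (α := ℝ)) k
  have hk' := zpow_pos (two_pos (α := ℝ)) k'
  rw [dyadicI, dyadicI, Set.Ico_subset_Ico_iff (by nlinarith)] at h
  by_contra! hlt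
  have : (2:ℝ) ^ k' < 2 ^ k := zpow_lt_zpow_right₀ one_lt_two hlt
  nlinarith [h.1, h.2]

namespace Tile

def up (t : Tile) : Bitile := ⟨t.k + 1, t.n / 2, t.l⟩

theorem up_freqI (t : Tile) : t.up.freqI = t.freqI := by
  change dyadicI (1 - (t.k + 1)) t.l = dyadicI (-t.k) t.l
  rw [show 1 - (t.k + 1) = -t.k by ring]

theorem timeI_subset_up (t : Tile) : t.timeI ⊆ t.up.timeI := dyadicI_subset_succ t.k t.n

theorem toSet_subset_up (t : Tile) : t.toSet ⊆ t.up.toSet :=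
  Set.prod_mono t.timeI_subset_up t.up_freqI.symm.subset

theorem disjoint_toSet_of_k_eq {t t' : Tile} (hk : t.k = t'.k) (hne : t ≠ t') :
    Disjoint t.toSet t'.toSet := by
  refine Set.disjoint_left.mpr fun z h h' => hne ?_
  obtain ⟨k, n, l⟩ := t
  obtain ⟨k', n', l'⟩ := t'
  obtain rfl : k = k' := hk
  obtain rfl : n = n' := eq_of_mem_dyadicI h.1 h'.1
  obtain rfl : l = l' := eq_of_mem_dyadicI h.2 h'.2
  rfl

theorem disjoint_freqI_of_k_lt {t : Tile} {P : Bitile} (hk : t.k < P.k) {ξ : ℝ}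
    (hξ : ξ ∉ t.freqI) (hξP : ξ ∈ P.freqI) : Disjoint t.freqI P.freqI :=
  Set.disjoint_left.mpr fun _ hy hyP => hξ (dyadicI_subset_of_le (by omega) hyP hy hξP)

end Tile

namespace Bitile

theorem freqI_eq_union (P : Bitile) : P.freqI = P.d.freqI ∪ P.u.freqI := by
  change dyadicI (1 - P.k) P.l = dyadicI (-P.k) (2 * P.l) ∪ dyadicI (-P.k) (2 * P.l + 1)
  rw [← dyadicI_succ, sub_eq_neg_add]

theorem d_freqI_subset (P : Bitile) : P.d.freqI ⊆ P.freqI :=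
  P.freqI_eq_union ▸ Set.subset_union_left

theorem u_freqI_subset (P : Bitile) : P.u.freqI ⊆ P.freqI :=
  P.freqI_eq_union ▸ Set.subset_union_right

theorem disjoint_d_u_freqI (P : Bitile) : Disjoint P.d.freqI P.u.freqI :=
  disjoint_dyadicI (k := -P.k) (show 2 * P.l ≠ 2 * P.l + 1 by omega)

theorem toSet_eq_union (P : Bitile) : P.toSet = P.d.toSet ∪ P.u.toSet := by
  rw [toSet, freqI_eq_union, Set.prod_union]
  rfl

theorem d_toSet_subset (P : Bitile) : P.d.toSet ⊆ P.toSet :=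
  P.toSet_eq_union ▸ Set.subset_union_left

theorem u_toSet_subset (P : Bitile) : P.u.toSet ⊆ P.toSet :=
  P.toSet_eq_union ▸ Set.subset_union_right

theorem freqI_subset_d_or_u {P Q : Bitile} (hk : Q.k < P.k) (h : P.freqI ⊆ Q.freqI) :
    P.freqI ⊆ Q.d.freqI ∨ P.freqI ⊆ Q.u.freqI := by
  have hξ := h (left_mem_dyadicI _ _)
  rw [freqI_eq_union] at hξ
  have hscale : 1 - P.k ≤ -Q.k := by omega
  exact hξ.imp (dyadicI_subset_of_le hscale (left_mem_dyadicI _ _))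
    (dyadicI_subset_of_le hscale (left_mem_dyadicI _ _))

end Bitile

theorem bitileLE.k_le {P Q : Bitile} (h : bitileLE P Q) : P.k ≤ Q.k := by
  have := le_of_dyadicI_subset h.2
  omega

theorem bitileLE.k_lt_of_ne {P Q : Bitile} (h : bitileLE P Q) (hne : P ≠ Q) : P.k < Q.k := by
  refine lt_of_le_of_ne h.k_le fun hk => hne ?_
  obtain ⟨k, n, l⟩ := P
  obtain ⟨k', n', l'⟩ := Q
  obtain rfl : k = k' := hk
  obtain rfl : n = n' := eq_of_mem_dyadicI (left_mem_dyadicI _ _) (h.1 (left_mem_dyadicI _ _))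
  obtain rfl : l = l' := eq_of_mem_dyadicI (h.2 (left_mem_dyadicI _ _)) (left_mem_dyadicI _ _)
  rfl

namespace Tree

variable {T : Tree}

theorem xiTop_mem (T : Tree) : T.xiTop ∈ T.top.freqI := left_mem_dyadicI _ _

theorem mem_of_lt_of_le (hconv : IsConvex T.carrier) {P Q : Bitile} (hQ : Q ∈ T.carrier)
    (hlt : bitileLT Q P) (hle : bitileLE P T.top) : P ∈ T.carrier := by
  by_cases hP : P = T.top
  · exact hP ▸ T.top_mem
  · exact hconv Q T.top P hQ T.top_mem hlt ⟨hle, hP⟩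

theorem up_mem (hconv : IsConvex T.carrier) {Q : Bitile} (hQ : Q ∈ T.carrier)
    (hk : Q.k < T.top.k) {t : Tile} (htk : t.k = Q.k) (htn : t.n = Q.n)
    (htω : t.freqI ⊆ Q.freqI) (hT : T.top.freqI ⊆ t.freqI) : t.up ∈ T.carrier := by
  have htime : Q.timeI = t.timeI := by rw [Bitile.timeI, Tile.timeI, htk, htn]
  have hQup : Q.timeI ⊆ t.up.timeI := htime ▸ t.timeI_subset_up
  refine mem_of_lt_of_le hconv hQ ⟨⟨hQup, t.up_freqI ▸ htω⟩, fun h => ?_⟩ ⟨?_, t.up_freqI ▸ hT⟩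
  · have : Q.k = t.k + 1 := congrArg Bitile.k h
    omega
  · have hx := left_mem_dyadicI Q.k Q.n
    exact dyadicI_subset_of_le (show t.k + 1 ≤ T.top.k by omega) (hQup hx)
      ((T.le_top Q hQ).1 hx)

theorem unionSet_subset (hconv : IsConvex T.carrier) :
    T.unionSet ⊆ T.top.u.toSet ∪ T.top.d.toSet ∪ (⋃ P ∈ T.Tu, P.d.toSet) ∪
      (⋃ P ∈ T.Td, P.u.toSet) := by
  intro z hz
  obtain ⟨_, ⟨Q, hQ, hzQ, rfl⟩, hmax⟩ :=
    Int.exists_greatest_of_bdd (P := fun k => ∃ Q ∈ T.carrier, z ∈ Q.toSet ∧ Q.k = k)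
      ⟨T.top.k, by rintro _ ⟨Q, hQ, -, rfl⟩; exact (T.le_top Q hQ).k_le⟩
      (by simpa [unionSet] using hz)
  rw [Bitile.toSet_eq_union] at hzQ
  by_cases hQtop : Q = T.top
  · subst hQtop
    rcases hzQ with hzd | hzu
    · exact Or.inl (Or.inl (Or.inr hzd))
    · exact Or.inl (Or.inl (Or.inl hzu))
  have hk : Q.k < T.top.k := (T.le_top Q hQ).k_lt_of_ne hQtop
  have hclimb : ∀ t : Tile, t.k = Q.k → t.n = Q.n → t.freqI ⊆ Q.freqI →
      T.top.freqI ⊆ t.freqI → z ∉ t.toSet := fun t htk htn htω hT hzt => by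
    have : t.k + 1 ≤ Q.k :=
      hmax _ ⟨t.up, up_mem hconv hQ hk htk htn htω hT, t.toSet_subset_up hzt, rfl⟩
    omega
  rcases Bitile.freqI_subset_d_or_u hk (T.le_top Q hQ).2 with hT | hT <;>
    rcases hzQ with hzd | hzu
  · exact absurd hzd (hclimb _ rfl rfl Q.d_freqI_subset hT)
  · exact Or.inr (Set.mem_biUnion ⟨hQ, hT⟩ hzu)
  · exact Or.inl (Or.inr (Set.mem_biUnion ⟨hQ, hT⟩ hzd))
  · exact absurd hzu (hclimb _ rfl rfl Q.u_freqI_subset hT)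

theorem unionSet_eq (hconv : IsConvex T.carrier) :
    T.unionSet = T.top.u.toSet ∪ T.top.d.toSet ∪ (⋃ P ∈ T.Tu, P.d.toSet) ∪
      (⋃ P ∈ T.Td, P.u.toSet) := by
  refine (unionSet_subset hconv).antisymm ?_
  have hsub : ∀ P ∈ T.carrier, P.toSet ⊆ T.unionSet := fun P hP =>
    Set.subset_biUnion_of_mem (u := Bitile.toSet) hP
  simp only [Set.union_subset_iff, Set.iUnion_subset_iff]
  exact ⟨⟨⟨T.top.u_toSet_subset.trans (hsub _ T.top_mem),
    T.top.d_toSet_subset.trans (hsub _ T.top_mem)⟩,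
    fun P hP => P.d_toSet_subset.trans (hsub P hP.1)⟩,
    fun P hP => P.u_toSet_subset.trans (hsub P hP.1)⟩

def tiles (T : Tree) : Set Tile := {T.top.u, T.top.d} ∪ Bitile.d '' T.Tu ∪ Bitile.u '' T.Td

theorem exists_of_mem_tiles {t : Tile} (ht : t ∈ T.tiles) :
    ∃ P ∈ T.carrier, t.k = P.k ∧ t.freqI ⊆ P.freqI ∧ (P = T.top ∨ T.xiTop ∉ t.freqI) := by
  rcases ht with ((rfl | rfl) | ⟨P, hP, rfl⟩) | ⟨P, hP, rfl⟩
  · exact ⟨T.top, T.top_mem, rfl, T.top.u_freqI_subset, Or.inl rfl⟩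
  · exact ⟨T.top, T.top_mem, rfl, T.top.d_freqI_subset, Or.inl rfl⟩
  · exact ⟨P, hP.1, rfl, P.d_freqI_subset,
      Or.inr fun h => Set.disjoint_left.mp P.disjoint_d_u_freqI h (hP.2 T.xiTop_mem)⟩
  · exact ⟨P, hP.1, rfl, P.u_freqI_subset,
      Or.inr fun h => Set.disjoint_right.mp P.disjoint_d_u_freqI h (hP.2 T.xiTop_mem)⟩

theorem disjoint_of_mem_tiles {t t' : Tile} (ht : t ∈ T.tiles) (ht' : t' ∈ T.tiles)
    (hne : t ≠ t') (hk : t.k ≤ t'.k) : Disjoint t.toSet t'.toSet := by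
  obtain ⟨P, -, htk, -, hξ⟩ := exists_of_mem_tiles ht
  obtain ⟨P', hP', htk', htω', -⟩ := exists_of_mem_tiles ht'
  rcases hk.lt_or_eq with hlt | heq
  · have hP'k := (T.le_top P' hP').k_le
    have hξt : T.xiTop ∉ t.freqI := hξ.resolve_left fun h => by subst h; omega
    refine Set.disjoint_prod.mpr (Or.inr ?_)
    exact (Tile.disjoint_freqI_of_k_lt (by omega) hξt
      ((T.le_top P' hP').2 T.xiTop_mem)).mono_right htω'
  · exact Tile.disjoint_toSet_of_k_eq heq hne

theorem pairwiseDisjoint_tiles (T : Tree) : T.tiles.PairwiseDisjoint Tile.toSet := by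
  intro t ht t' ht' hne
  rcases le_total t.k t'.k with hk | hk
  · exact disjoint_of_mem_tiles ht ht' hne hk
  · exact (disjoint_of_mem_tiles ht' ht hne.symm hk).symm

end Tree

/-- The canonical tiling of a convex tree: `⋃_{P ∈ T} P` is the disjoint union of
`(P_T)_u`, `(P_T)_d`, the tiles `P_d` for `P ∈ T_u`, and the tiles `P_u` for `P ∈ T_d`. -/
theorem tree_tiling :
    ∀ T : Tree, IsConvex T.carrier →
      (⋃ P ∈ T.carrier, Bitile.toSet P) =
        T.top.u.toSet ∪ T.top.d.toSet ∪ (⋃ P ∈ T.Tu, (Bitile.d P).toSet) ∪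
          (⋃ P ∈ T.Td, (Bitile.u P).toSet) ∧
      Set.PairwiseDisjoint
        (({T.top.u, T.top.d} ∪ (Bitile.d '' T.Tu) ∪ (Bitile.u '' T.Td) : Set Tile))
        Tile.toSet :=
  fun T hconv => ⟨Tree.unionSet_eq hconv, T.pairwiseDisjoint_tiles⟩

end Quartile
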